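/- Let S be a nonempty finite type, P a row-stochastic matrix in Matrix S S ℝ, r : S → ℝ, and suppose g ∈ ℝ and h : S → ℝ satisfy the Poisson equation g + h s = r s + (P.mulVec h) s for every s. Let γ ∈ [0,1) and let V : S → ℝ satisfy the discounted evaluation equation V = r + γ • P.mulVec V. Then Sp(V) ≤ 4 * Sp(h). -/

import Mathlib

/-!
Subtracting the Poisson equation from the discounted equation shows that `w = V - h` solves
`w = γ P w + (g - (1 - γ) P h)`. Averaging by a stochastic matrix does not increase the span, so
`Sp w ≤ γ Sp w + (1 - γ) Sp h`, i.e. `Sp w ≤ Sp h`, and `Sp V ≤ Sp w + Sp h ≤ 2 Sp h`.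
-/

open Finset

noncomputable def supNorm {X : Type*} [Fintype X] [Nonempty X] (v : X → ℝ) : ℝ :=
  Finset.univ.sup' Finset.univ_nonempty fun x => |v x|

noncomputable def spanSN {X : Type*} [Fintype X] [Nonempty X] (v : X → ℝ) : ℝ :=
  (Finset.univ.sup' Finset.univ_nonempty v) - (Finset.univ.inf' Finset.univ_nonempty v)

def RowStochastic {S : Type*} [Fintype S] (P : Matrix S S ℝ) : Prop :=
  (∀ s s', 0 ≤ P s s') ∧ ∀ s, ∑ s', P s s' = 1

open Matrix

section SpanSeminorm

variable {X : Type*} [Fintype X] [Nonempty X]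

lemma spanSN_le_iff {v : X → ℝ} {C : ℝ} : spanSN v ≤ C ↔ ∀ x y, v x - v y ≤ C := by
  simp only [spanSN, sub_le_comm, le_inf'_iff, mem_univ, true_implies, sub_le_iff_le_add,
    sup'_le_iff]
  exact ⟨fun h x y => by linarith [h y x], fun h y x => by linarith [h x y]⟩

lemma sub_le_spanSN (v : X → ℝ) (x y : X) : v x - v y ≤ spanSN v :=
  spanSN_le_iff.1 le_rfl x y

lemma spanSN_nonneg (v : X → ℝ) : 0 ≤ spanSN v := by
  simpa using sub_le_spanSN v (Classical.arbitrary X) (Classical.arbitrary X)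

lemma spanSN_add_le (v w : X → ℝ) : spanSN (v + w) ≤ spanSN v + spanSN w :=
  spanSN_le_iff.2 fun x y => by
    simp only [Pi.add_apply]
    linarith [sub_le_spanSN v x y, sub_le_spanSN w x y]

end SpanSeminorm

namespace RowStochastic

variable {S : Type*} [Fintype S] [Nonempty S] {P : Matrix S S ℝ}

lemma inf'_le_mulVec (hP : RowStochastic P) (v : S → ℝ) (s : S) :
    univ.inf' univ_nonempty v ≤ (P *ᵥ v) s :=
  calc univ.inf' univ_nonempty v = ∑ s', P s s' * univ.inf' univ_nonempty v := by
        rw [← Finset.sum_mul, hP.2 s, one_mul]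
    _ ≤ ∑ s', P s s' * v s' :=
        sum_le_sum fun s' _ => mul_le_mul_of_nonneg_left (inf'_le _ (mem_univ s')) (hP.1 s s')

lemma mulVec_le_sup' (hP : RowStochastic P) (v : S → ℝ) (s : S) :
    (P *ᵥ v) s ≤ univ.sup' univ_nonempty v :=
  calc (P *ᵥ v) s = ∑ s', P s s' * v s' := rfl
    _ ≤ ∑ s', P s s' * univ.sup' univ_nonempty v :=
        sum_le_sum fun s' _ => mul_le_mul_of_nonneg_left (le_sup' _ (mem_univ s')) (hP.1 s s')
    _ = univ.sup' univ_nonempty v := by rw [← Finset.sum_mul, hP.2 s, one_mul]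

lemma mulVec_sub_le_spanSN (hP : RowStochastic P) (v : S → ℝ) (x y : S) :
    (P *ᵥ v) x - (P *ᵥ v) y ≤ spanSN v := by
  rw [spanSN]
  linarith [hP.mulVec_le_sup' v x, hP.inf'_le_mulVec v y]

lemma one_sub_mul_spanSN_le {γ : ℝ} (hγ : 0 ≤ γ) {v f : S → ℝ} (hP : RowStochastic P)
    (hv : v = γ • (P *ᵥ v) + f) : (1 - γ) * spanSN v ≤ spanSN f := by
  have : spanSN v ≤ γ * spanSN v + spanSN f := spanSN_le_iff.2 fun x y => by
    have hx : v x = γ * (P *ᵥ v) x + f x := by simpa using congrFun hv x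
    have hy : v y = γ * (P *ᵥ v) y + f y := by simpa using congrFun hv y
    nlinarith [hP.mulVec_sub_le_spanSN v x y, sub_le_spanSN f x y]
  linarith

end RowStochastic

/-- Per-kernel conclusion of the paper's Lemma 6: the span of the discounted value
function is bounded by four times the bias span. -/
theorem stmt11 {S : Type*} [Fintype S] [Nonempty S]
    (P : Matrix S S ℝ) (hP : RowStochastic P)
    (r : S → ℝ) (g : ℝ) (h : S → ℝ)
    (hPoisson : ∀ s, g + h s = r s + P.mulVec h s)
    (γ : ℝ) (hγ0 : 0 ≤ γ) (hγ1 : γ < 1)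
    (V : S → ℝ) (hV : V = r + γ • P.mulVec V) :
    spanSN V ≤ 4 * spanSN h := by
  set f : S → ℝ := fun s => g - (1 - γ) * (P *ᵥ h) s
  have hw : V - h = γ • (P *ᵥ (V - h)) + f := by
    funext s
    have hVs : V s = r s + γ * (P *ᵥ V) s := by simpa using congrFun hV s
    simp only [Matrix.mulVec_sub, Pi.add_apply, Pi.sub_apply, Pi.smul_apply, smul_eq_mul, f]
    linarith [hPoisson s]
  have hf : spanSN f ≤ (1 - γ) * spanSN h := spanSN_le_iff.2 fun x y => by
    nlinarith [hP.mulVec_sub_le_spanSN h y x]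
  have hw_span : spanSN (V - h) ≤ spanSN h :=
    le_of_mul_le_mul_left ((hP.one_sub_mul_spanSN_le hγ0 hw).trans hf) (by linarith)
  calc spanSN V = spanSN (V - h + h) := by rw [sub_add_cancel]
    _ ≤ spanSN (V - h) + spanSN h := spanSN_add_le _ _
    _ ≤ 4 * spanSN h := by linarith [spanSN_nonneg h]
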